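/- Let X be a separable F-space and T a continuous linear operator on X. If T ⊕ T is hypercyclic on X × X, then for every n ≥ 2 the n-fold direct sum T ⊕ T ⊕ ⋯ ⊕ T is hypercyclic on X^n (Furstenberg's theorem in the linear setting). -/

import Mathlib

/-!
Write `N(U, V) = {n | U ∩ T⁻ⁿ V ≠ ∅}` for the return times of `T` from `U` to `V`. Transitivity
of `T ⊕ T` says that `N(U₁, U₂) ∩ N(V₁, V₂)` is never empty, and for `n` in it the open sets
`U₁ ∩ T⁻ⁿ U₂` and `V₁ ∩ T⁻ⁿ V₂` are nonempty with return times inside `N(U₁, V₁) ∩ N(U₂, V₂)`.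
Iterating, any finitely many pairs of return-time sets have a common element, which is
transitivity of the `n`-fold sum on boxes. A dense orbit of `T ⊕ T` gives transitivity since
`X × X` has no isolated points, and transitivity gives a dense orbit on the Polish space `Xⁿ`
by Birkhoff's theorem (a Baire category argument).
-/

open Filter Topology Set
open scoped Classical

/-- The lower density of a set of natural numbers:
`liminf_{N→∞} |A ∩ [1,N]| / N`. -/
noncomputable def lowerDensity (A : Set ℕ) : ℝ :=
  Filter.liminf
    (fun N : ℕ => (((Finset.Icc 1 N).filter (fun n => n ∈ A)).card : ℝ) / N)
    Filter.atTop

open Function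

section ReturnTimes

variable {α : Type*} {f : α → α}

def returnTimes (f : α → α) (U V : Set α) : Set ℕ := {n | (U ∩ f^[n] ⁻¹' V).Nonempty}

theorem returnTimes_mono {U U' V V' : Set α} (hU : U ⊆ U') (hV : V ⊆ V') :
    returnTimes f U V ⊆ returnTimes f U' V' :=
  fun _ ⟨x, hxU, hxV⟩ => ⟨x, hU hxU, hV hxV⟩

theorem returnTimes_prodMap {β : Type*} (g : β → β) (U₁ V₁ : Set α) (U₂ V₂ : Set β) :
    returnTimes (Prod.map f g) (U₁ ×ˢ U₂) (V₁ ×ˢ V₂) =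
      returnTimes f U₁ V₁ ∩ returnTimes g U₂ V₂ := by
  ext n
  simp only [returnTimes, Prod.map_iterate, mem_ofPred_eq, mem_inter_iff, preimage_prod_map_prod,
    prod_inter_prod, prod_nonempty_iff]

theorem returnTimes_piMap {ι : Type*} {β : ι → Type*} (g : ∀ i, β i → β i)
    (U V : ∀ i, Set (β i)) :
    returnTimes (Pi.map g) (univ.pi U) (univ.pi V) = ⋂ i, returnTimes (g i) (U i) (V i) := by
  ext n
  have hpre : Pi.map (fun i => (g i)^[n]) ⁻¹' univ.pi V = univ.pi fun i => (g i)^[n] ⁻¹' V i := by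
    ext; simp
  simp only [returnTimes, Pi.map_iterate, mem_ofPred_eq, mem_iInter, hpre, ← pi_inter_distrib,
    univ_pi_nonempty_iff]

theorem returnTimes_inter_preimage_subset (n : ℕ) (U₁ V₁ U₂ V₂ : Set α) :
    returnTimes f (U₁ ∩ f^[n] ⁻¹' U₂) (V₁ ∩ f^[n] ⁻¹' V₂) ⊆
      returnTimes f U₁ V₁ ∩ returnTimes f U₂ V₂ := by
  rintro m ⟨x, ⟨hx₁, hx₂⟩, hmx₁, hmx₂⟩
  refine ⟨⟨x, hx₁, hmx₁⟩, f^[n] x, hx₂, ?_⟩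
  rwa [mem_preimage, ← iterate_add_apply, add_comm, iterate_add_apply]

end ReturnTimes

section Transitivity

variable {α : Type*} [TopologicalSpace α] {f : α → α}

def TopologicallyTransitive (f : α → α) : Prop :=
  ∀ U V : Set α, IsOpen U → U.Nonempty → IsOpen V → V.Nonempty → (returnTimes f U V).Nonempty

theorem TopologicallyTransitive.dense_iUnion_preimage_iterate (ht : TopologicallyTransitive f)
    {V : Set α} (hV : IsOpen V) (hVne : V.Nonempty) : Dense (⋃ n, f^[n] ⁻¹' V) := by
  refine dense_iff_inter_open.2 fun U hU hUne => ?_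
  obtain ⟨n, x, hxU, hxV⟩ := ht U V hU hUne hV hVne
  exact ⟨x, hxU, mem_iUnion.2 ⟨n, hxV⟩⟩

theorem TopologicallyTransitive.exists_dense_orbit [Nonempty α] [BaireSpace α]
    [SecondCountableTopology α] (hf : Continuous f) (ht : TopologicallyTransitive f) :
    ∃ y, Dense (range fun n => f^[n] y) := by
  obtain ⟨B, hBc, -, hB⟩ := TopologicalSpace.exists_countable_basis α
  have hdense : Dense (⋂ V ∈ {V ∈ B | V.Nonempty}, ⋃ n, f^[n] ⁻¹' V) :=
    dense_biInter_of_isOpen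
      (fun V hV => isOpen_iUnion fun n => (hf.iterate n).isOpen_preimage _ (hB.isOpen hV.1))
      (hBc.mono (sep_subset _ _))
      (fun V hV => ht.dense_iUnion_preimage_iterate (hB.isOpen hV.1) hV.2)
  obtain ⟨y, hy⟩ := hdense.nonempty
  refine ⟨y, hB.dense_iff.2 fun V hV hVne => ?_⟩
  obtain ⟨n, hn⟩ := mem_iUnion.1 (mem_iInter₂.1 hy V ⟨hV, hVne⟩)
  exact ⟨_, hn, n, rfl⟩

theorem Dense.range_iterate_tail [T1Space α] [∀ x : α, (𝓝[≠] x).NeBot] {z : α}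
    (hz : Dense (range fun n => f^[n] z)) (k : ℕ) : Dense (range fun n => f^[n] (f^[k] z)) := by
  refine (hz.sdiff_finite ((finite_Iio k).image fun n => f^[n] z)).mono ?_
  rintro _ ⟨⟨m, rfl⟩, hm⟩
  have hkm : k ≤ m := not_lt.1 fun hmk => hm ⟨m, hmk, rfl⟩
  exact ⟨m - k, by dsimp only; rw [← iterate_add_apply, Nat.sub_add_cancel hkm]⟩

theorem topologicallyTransitive_of_dense_orbit [T1Space α] [∀ x : α, (𝓝[≠] x).NeBot] {z : α}
    (hz : Dense (range fun n => f^[n] z)) : TopologicallyTransitive f := by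
  intro U V hU hUne hV hVne
  obtain ⟨_, hkU, k, rfl⟩ := hz.inter_open_nonempty U hU hUne
  obtain ⟨_, hnV, n, rfl⟩ := (hz.range_iterate_tail k).inter_open_nonempty V hV hVne
  exact ⟨n, _, hkU, hnV⟩

end Transitivity

section WeakMixing

variable {α : Type*} [TopologicalSpace α] {f : α → α}

theorem TopologicallyTransitive.of_prodMap_self (h : TopologicallyTransitive (Prod.map f f)) :
    TopologicallyTransitive f := by
  intro U V hU hUne hV hVne
  obtain ⟨n, hn, -⟩ := returnTimes_prodMap f U V U V ▸
    h _ _ (hU.prod hU) (hUne.prod hUne) (hV.prod hV) (hVne.prod hVne)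
  exact ⟨n, hn⟩

theorem TopologicallyTransitive.exists_returnTimes_subset_inter
    (h : TopologicallyTransitive (Prod.map f f)) (hf : Continuous f) {U₁ V₁ U₂ V₂ : Set α}
    (hU₁ : IsOpen U₁) (hU₁ne : U₁.Nonempty) (hV₁ : IsOpen V₁) (hV₁ne : V₁.Nonempty)
    (hU₂ : IsOpen U₂) (hU₂ne : U₂.Nonempty) (hV₂ : IsOpen V₂) (hV₂ne : V₂.Nonempty) :
    ∃ U V : Set α, IsOpen U ∧ U.Nonempty ∧ IsOpen V ∧ V.Nonempty ∧
      returnTimes f U V ⊆ returnTimes f U₁ V₁ ∩ returnTimes f U₂ V₂ := by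
  obtain ⟨n, hnU, hnV⟩ := returnTimes_prodMap f U₁ U₂ V₁ V₂ ▸
    h _ _ (hU₁.prod hV₁) (hU₁ne.prod hV₁ne) (hU₂.prod hV₂) (hU₂ne.prod hV₂ne)
  exact ⟨_, _, hU₁.inter ((hf.iterate n).isOpen_preimage _ hU₂), hnU,
    hV₁.inter ((hf.iterate n).isOpen_preimage _ hV₂), hnV,
    returnTimes_inter_preimage_subset n U₁ V₁ U₂ V₂⟩

theorem TopologicallyTransitive.exists_returnTimes_subset_biInter [Nonempty α]
    (h : TopologicallyTransitive (Prod.map f f)) (hf : Continuous f) {ι : Type*}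
    {U V : ι → Set α} (hU : ∀ i, IsOpen (U i)) (hUne : ∀ i, (U i).Nonempty)
    (hV : ∀ i, IsOpen (V i)) (hVne : ∀ i, (V i).Nonempty) (s : Finset ι) :
    ∃ U' V' : Set α, IsOpen U' ∧ U'.Nonempty ∧ IsOpen V' ∧ V'.Nonempty ∧
      returnTimes f U' V' ⊆ ⋂ i ∈ s, returnTimes f (U i) (V i) := by
  induction s using Finset.induction_on with
  | empty => exact ⟨univ, univ, isOpen_univ, univ_nonempty, isOpen_univ, univ_nonempty, by simp⟩
  | insert i s _ ih =>
    obtain ⟨U₀, V₀, hU₀, hU₀ne, hV₀, hV₀ne, hsub₀⟩ := ih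
    obtain ⟨U', V', hU', hU'ne, hV', hV'ne, hsub⟩ := h.exists_returnTimes_subset_inter hf
      (hU i) (hUne i) (hV i) (hVne i) hU₀ hU₀ne hV₀ hV₀ne
    refine ⟨U', V', hU', hU'ne, hV', hV'ne, ?_⟩
    rw [Finset.set_biInter_insert]
    exact hsub.trans (inter_subset_inter_right _ hsub₀)

theorem TopologicallyTransitive.piMap [Nonempty α] {ι : Type*} [Finite ι]
    (h : TopologicallyTransitive (Prod.map f f)) (hf : Continuous f) :
    TopologicallyTransitive (Pi.map fun _ : ι => f) := by
  cases nonempty_fintype ι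
  rintro U V hU ⟨u, hu⟩ hV ⟨v, hv⟩
  obtain ⟨Us, hUs, hUsU⟩ := isOpen_pi_iff'.1 hU u hu
  obtain ⟨Vs, hVs, hVsV⟩ := isOpen_pi_iff'.1 hV v hv
  obtain ⟨U', V', hU', hU'ne, hV', hV'ne, hsub⟩ := h.exists_returnTimes_subset_biInter hf
    (fun i => (hUs i).1) (fun i => ⟨u i, (hUs i).2⟩) (fun i => (hVs i).1)
    (fun i => ⟨v i, (hVs i).2⟩) Finset.univ
  obtain ⟨n, hn⟩ := h.of_prodMap_self U' V' hU' hU'ne hV' hV'ne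
  refine ⟨n, returnTimes_mono hUsU hVsV ?_⟩
  rw [returnTimes_piMap]
  simpa using hsub hn

end WeakMixing

/-- Furstenberg's theorem in the linear setting: if `T ⊕ T` is hypercyclic,
then every `n`-fold direct sum of `T` (`n ≥ 2`) is hypercyclic on `Xⁿ`. -/
theorem stmt_5 {X : Type*} [AddCommGroup X] [Module ℝ X] [MetricSpace X]
    [CompleteSpace X] [TopologicalSpace.SeparableSpace X]
    [IsTopologicalAddGroup X] [ContinuousSMul ℝ X]
    (T : X →L[ℝ] X)
    (h2 : ∃ z : X × X, Dense (Set.range fun k : ℕ => ((T.prodMap T) ^ k) z)) :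
    ∀ n : ℕ, 2 ≤ n →
      ∃ y : Fin n → X,
        Dense (Set.range fun k : ℕ =>
          ((ContinuousLinearMap.pi fun i : Fin n =>
              T.comp (ContinuousLinearMap.proj i)) ^ k) y) := by
  intro n _
  rcases subsingleton_or_nontrivial X with hX | hX
  · exact ⟨0, by rw [(range_nonempty _).eq_univ]; exact dense_univ⟩
  have := UniformSpace.secondCountable_of_separable X
  obtain ⟨z, hz⟩ := h2
  simp only [FunLike.coe_pow_eq_iterate, ContinuousLinearMap.coe_prodMap'] at hz
  have hT : TopologicallyTransitive (Prod.map T T) := topologicallyTransitive_of_dense_orbit hz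
  obtain ⟨y, hy⟩ := (hT.piMap (ι := Fin n) T.continuous).exists_dense_orbit
    (Continuous.piMap fun _ => T.continuous)
  have hpi : ⇑(ContinuousLinearMap.pi fun i : Fin n => T.comp (ContinuousLinearMap.proj i)) =
      Pi.map fun _ => T := rfl
  exact ⟨y, by simpa only [FunLike.coe_pow_eq_iterate, hpi] using hy⟩
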